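/- arXiv:1212.6355 — 6 statements merged into one kernel-verified Lean document; each statement's English description precedes it below -/
import Mathlib

section
/- If (x¹, y¹) is a Nash equilibrium of the bimatrix game (A¹, B¹) and (x², y²) is a Nash equilibrium of (A², B²), then the product strategy profile (x, y) defined by x_{[i₁,i₂]} = x¹_{i₁}·x²_{i₂} and y_{[j₁,j₂]} = y¹_{j₁}·y²_{j₂} is a Nash equilibrium of the product game (A¹,B¹)×(A²,B²). -/
open Finset

def IsStochastic {I : Type*} [Fintype I] (x : I → ℝ) : Prop :=
  (∀ i, 0 ≤ x i) ∧ ∑ i, x i = 1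

def payoff {I J : Type*} [Fintype I] [Fintype J]
    (A : Matrix I J ℝ) (x : I → ℝ) (y : J → ℝ) : ℝ :=
  ∑ i, ∑ j, x i * A i j * y j

def IsBestResponse {I J : Type*} [Fintype I] [Fintype J]
    (A : Matrix I J ℝ) (x : I → ℝ) (y : J → ℝ) : Prop :=
  ∀ x', IsStochastic x' → payoff A x' y ≤ payoff A x y

def IsNash {I J : Type*} [Fintype I] [Fintype J]
    (A B : Matrix I J ℝ) (x : I → ℝ) (y : J → ℝ) : Prop :=
  IsStochastic x ∧ IsStochastic y ∧
  (∀ x', IsStochastic x' → payoff A x' y ≤ payoff A x y) ∧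
  (∀ y', IsStochastic y' → payoff B x y' ≤ payoff B x y)

def prodGame {I₁ J₁ I₂ J₂ : Type*} (A1 : Matrix I₁ J₁ ℝ) (A2 : Matrix I₂ J₂ ℝ) :
    Matrix (I₁ × I₂) (J₁ × J₂) ℝ :=
  fun i j => A1 i.1 j.1 + A2 i.2 j.2

def sumGame {I₁ J₁ I₂ J₂ : Type*} (A1 : Matrix I₁ J₁ ℝ) (A2 : Matrix I₂ J₂ ℝ) (c : ℝ) :
    Matrix (I₁ ⊕ I₂) (J₁ ⊕ J₂) ℝ :=
  fun i j => match i, j with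
  | Sum.inl i, Sum.inl j => A1 i j
  | Sum.inr i, Sum.inr j => A2 i j
  | _, _ => c

def IsPureNash {I J : Type*} (A B : Matrix I J ℝ) (i : I) (j : J) : Prop :=
  (∀ k, A k j ≤ A i j) ∧ (∀ l, B i l ≤ B i j)


lemma payoff_prod_left {n₁ m₁ n₂ m₂ : ℕ}
    (A1 : Matrix (Fin n₁) (Fin m₁) ℝ) (A2 : Matrix (Fin n₂) (Fin m₂) ℝ)
    (x' : Fin n₁ × Fin n₂ → ℝ) (y1 : Fin m₁ → ℝ) (y2 : Fin m₂ → ℝ)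
    (hy1 : ∑ j, y1 j = 1) (hy2 : ∑ j, y2 j = 1) :
    payoff (prodGame A1 A2) x' (fun j => y1 j.1 * y2 j.2) =
      payoff A1 (fun i1 => ∑ i2, x' (i1, i2)) y1 +
      payoff A2 (fun i2 => ∑ i1, x' (i1, i2)) y2 := by
  have key : ∀ i1 i2, (∑ j1, ∑ j2, x' (i1, i2) * (A1 i1 j1 + A2 i2 j2) * (y1 j1 * y2 j2))
      = (∑ j1, x' (i1,i2) * A1 i1 j1 * y1 j1) + (∑ j2, x' (i1,i2) * A2 i2 j2 * y2 j2) := by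
    intro i1 i2
    have e : ∀ (j1 : Fin m₁) (j2 : Fin m₂),
        x' (i1,i2) * (A1 i1 j1 + A2 i2 j2) * (y1 j1 * y2 j2)
          = (x' (i1,i2) * A1 i1 j1 * y1 j1) * y2 j2
            + y1 j1 * (x' (i1,i2) * A2 i2 j2 * y2 j2) := by intros; ring
    simp only [e, Finset.sum_add_distrib, ← Finset.sum_mul, ← Finset.mul_sum, hy1, hy2,
      one_mul, mul_one]
  calc payoff (prodGame A1 A2) x' (fun j => y1 j.1 * y2 j.2)
      = ∑ i1, ∑ i2, ((∑ j1, x' (i1,i2) * A1 i1 j1 * y1 j1)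
        + (∑ j2, x' (i1,i2) * A2 i2 j2 * y2 j2)) := by
        simp only [payoff, prodGame, Fintype.sum_prod_type]
        exact Finset.sum_congr rfl fun i1 _ => Finset.sum_congr rfl fun i2 _ => key i1 i2
    _ = (∑ i1, ∑ i2, ∑ j1, x' (i1,i2) * A1 i1 j1 * y1 j1)
        + (∑ i2, ∑ i1, ∑ j2, x' (i1,i2) * A2 i2 j2 * y2 j2) := by
        rw [Finset.sum_comm (γ := Fin n₂) (f := fun i2 i1 => ∑ j2, x' (i1,i2) * A2 i2 j2 * y2 j2)]
        simp [Finset.sum_add_distrib]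
    _ = payoff A1 (fun i1 => ∑ i2, x' (i1, i2)) y1 +
        payoff A2 (fun i2 => ∑ i1, x' (i1, i2)) y2 := by
        simp only [payoff, Finset.sum_mul]
        congr 1
        · exact Finset.sum_congr rfl fun i1 _ => Finset.sum_comm
        · exact Finset.sum_congr rfl fun i2 _ => Finset.sum_comm

lemma payoff_prod_right {n₁ m₁ n₂ m₂ : ℕ}
    (B1 : Matrix (Fin n₁) (Fin m₁) ℝ) (B2 : Matrix (Fin n₂) (Fin m₂) ℝ)
    (x1 : Fin n₁ → ℝ) (x2 : Fin n₂ → ℝ) (y' : Fin m₁ × Fin m₂ → ℝ)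
    (hx1 : ∑ i, x1 i = 1) (hx2 : ∑ i, x2 i = 1) :
    payoff (prodGame B1 B2) (fun i => x1 i.1 * x2 i.2) y' =
      payoff B1 x1 (fun j1 => ∑ j2, y' (j1, j2)) +
      payoff B2 x2 (fun j2 => ∑ j1, y' (j1, j2)) := by
  have key : ∀ j1 j2, (∑ i1, ∑ i2, (x1 i1 * x2 i2) * (B1 i1 j1 + B2 i2 j2) * y' (j1, j2))
      = (∑ i1, x1 i1 * B1 i1 j1 * y' (j1,j2)) + (∑ i2, x2 i2 * B2 i2 j2 * y' (j1,j2)) := by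
    intro j1 j2
    have e : ∀ (i1 : Fin n₁) (i2 : Fin n₂),
        (x1 i1 * x2 i2) * (B1 i1 j1 + B2 i2 j2) * y' (j1,j2)
          = (x1 i1 * B1 i1 j1 * y' (j1,j2)) * x2 i2
            + x1 i1 * (x2 i2 * B2 i2 j2 * y' (j1,j2)) := by intros; ring
    simp only [e, Finset.sum_add_distrib, ← Finset.sum_mul, ← Finset.mul_sum, hx1, hx2,
      one_mul, mul_one]
  calc payoff (prodGame B1 B2) (fun i => x1 i.1 * x2 i.2) y'
      = ∑ j1, ∑ j2, ∑ i1, ∑ i2, (x1 i1 * x2 i2) * (B1 i1 j1 + B2 i2 j2) * y' (j1, j2) := by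
        simp only [payoff, prodGame, Fintype.sum_prod_type]
        exact ((Finset.sum_congr rfl fun i1 _ => Finset.sum_comm).trans
          Finset.sum_comm).trans (Finset.sum_congr rfl fun j1 _ =>
            (Finset.sum_congr rfl fun i1 _ => Finset.sum_comm).trans Finset.sum_comm)
    _ = ∑ j1, ∑ j2, ((∑ i1, x1 i1 * B1 i1 j1 * y' (j1,j2))
        + (∑ i2, x2 i2 * B2 i2 j2 * y' (j1,j2))) := by
        exact Finset.sum_congr rfl fun j1 _ => Finset.sum_congr rfl fun j2 _ => key j1 j2
    _ = (∑ j1, ∑ j2, ∑ i1, x1 i1 * B1 i1 j1 * y' (j1,j2))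
        + (∑ j2, ∑ j1, ∑ i2, x2 i2 * B2 i2 j2 * y' (j1,j2)) := by
        rw [Finset.sum_comm (γ := Fin m₂)
          (f := fun j2 j1 => ∑ i2, x2 i2 * B2 i2 j2 * y' (j1,j2))]
        simp [Finset.sum_add_distrib]
    _ = payoff B1 x1 (fun j1 => ∑ j2, y' (j1, j2)) +
        payoff B2 x2 (fun j2 => ∑ j1, y' (j1, j2)) := by
        simp only [payoff, Finset.mul_sum]
        congr 1
        · exact (Finset.sum_congr rfl fun j1 _ => Finset.sum_comm).trans Finset.sum_comm
        · exact (Finset.sum_congr rfl fun j2 _ => Finset.sum_comm).trans Finset.sum_comm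

theorem product_of_nash_is_nash {n₁ m₁ n₂ m₂ : ℕ}
    (A1 B1 : Matrix (Fin n₁) (Fin m₁) ℝ) (A2 B2 : Matrix (Fin n₂) (Fin m₂) ℝ)
    (x1 : Fin n₁ → ℝ) (y1 : Fin m₁ → ℝ) (x2 : Fin n₂ → ℝ) (y2 : Fin m₂ → ℝ)
    (h1 : IsNash A1 B1 x1 y1) (h2 : IsNash A2 B2 x2 y2) :
    IsNash (prodGame A1 A2) (prodGame B1 B2)
      (fun i => x1 i.1 * x2 i.2) (fun j => y1 j.1 * y2 j.2) := by
  obtain ⟨⟨hx1n, hx1s⟩, ⟨hy1n, hy1s⟩, hbr1, hbc1⟩ := h1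
  obtain ⟨⟨hx2n, hx2s⟩, ⟨hy2n, hy2s⟩, hbr2, hbc2⟩ := h2
  have hxs : IsStochastic (fun i : Fin n₁ × Fin n₂ => x1 i.1 * x2 i.2) := by
    refine ⟨fun i => mul_nonneg (hx1n i.1) (hx2n i.2), ?_⟩
    rw [Fintype.sum_prod_type]
    simp only [← Finset.mul_sum, hx2s, mul_one, hx1s]
  have hys : IsStochastic (fun j : Fin m₁ × Fin m₂ => y1 j.1 * y2 j.2) := by
    refine ⟨fun j => mul_nonneg (hy1n j.1) (hy2n j.2), ?_⟩
    rw [Fintype.sum_prod_type]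
    simp only [← Finset.mul_sum, hy2s, mul_one, hy1s]
  have hmx1 : (fun i1 => ∑ i2, x1 i1 * x2 i2) = x1 := by
    funext i1; rw [← Finset.mul_sum, hx2s, mul_one]
  have hmx2 : (fun i2 => ∑ i1, x1 i1 * x2 i2) = x2 := by
    funext i2; simp only [← Finset.sum_mul, hx1s, one_mul]
  have hmy1 : (fun j1 => ∑ j2, y1 j1 * y2 j2) = y1 := by
    funext j1; rw [← Finset.mul_sum, hy2s, mul_one]
  have hmy2 : (fun j2 => ∑ j1, y1 j1 * y2 j2) = y2 := by
    funext j2; simp only [← Finset.sum_mul, hy1s, one_mul]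
  refine ⟨hxs, hys, ?_, ?_⟩
  · intro x' hx'
    rw [payoff_prod_left A1 A2 x' y1 y2 hy1s hy2s,
      payoff_prod_left A1 A2 _ y1 y2 hy1s hy2s, hmx1, hmx2]
    have hm1 : IsStochastic (fun i1 => ∑ i2, x' (i1, i2)) := by
      refine ⟨fun i1 => Finset.sum_nonneg fun i2 _ => hx'.1 _, ?_⟩
      rw [← hx'.2, Fintype.sum_prod_type]
    have hm2 : IsStochastic (fun i2 => ∑ i1, x' (i1, i2)) := by
      refine ⟨fun i2 => Finset.sum_nonneg fun i1 _ => hx'.1 _, ?_⟩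
      rw [← hx'.2, Fintype.sum_prod_type]
      exact Finset.sum_comm
    exact add_le_add (hbr1 _ hm1) (hbr2 _ hm2)
  · intro y' hy'
    rw [payoff_prod_right B1 B2 x1 x2 y' hx1s hx2s,
      payoff_prod_right B1 B2 x1 x2 _ hx1s hx2s, hmy1, hmy2]
    have hm1 : IsStochastic (fun j1 => ∑ j2, y' (j1, j2)) := by
      refine ⟨fun j1 => Finset.sum_nonneg fun j2 _ => hy'.1 _, ?_⟩
      rw [← hy'.2, Fintype.sum_prod_type]
    have hm2 : IsStochastic (fun j2 => ∑ j1, y' (j1, j2)) := by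
      refine ⟨fun j2 => Finset.sum_nonneg fun j1 _ => hy'.1 _, ?_⟩
      rw [← hy'.2, Fintype.sum_prod_type]
      exact Finset.sum_comm
    exact add_le_add (hbc1 _ hm1) (hbc2 _ hm2)
end

section
/- If (x, y) is a Nash equilibrium of the product game (A¹,B¹)×(A²,B²), then the marginal strategies (x¹, y¹) defined by x¹_i = Σ_{l=1}^{n₂} x_{[i,l]} and y¹_j = Σ_{l=1}^{m₂} y_{[j,l]} form a Nash equilibrium of the factor game (A¹, B¹). -/
open Finset

lemma payoff_prodGame {n₁ m₁ n₂ m₂ : ℕ} (A1 : Matrix (Fin n₁) (Fin m₁) ℝ)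
    (A2 : Matrix (Fin n₂) (Fin m₂) ℝ) (x : Fin n₁ × Fin n₂ → ℝ) (y : Fin m₁ × Fin m₂ → ℝ) :
    payoff (prodGame A1 A2) x y =
      payoff A1 (fun i => ∑ l, x (i, l)) (fun j => ∑ l, y (j, l)) +
      payoff A2 (fun i => ∑ k, x (k, i)) (fun j => ∑ k, y (k, j)) := by
  simp only [payoff, prodGame, Fintype.sum_prod_type, sum_mul, mul_sum, mul_add, add_mul,
    ← sum_add_distrib]
  simp only [sum_add_distrib]
  congr 1
  · refine Finset.sum_congr rfl fun i₁ _ => ?_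
    rw [Finset.sum_comm]
    refine Finset.sum_congr rfl fun j₁ _ => Finset.sum_comm
  · rw [Finset.sum_comm]
    refine Finset.sum_congr rfl fun i₂ _ => ?_
    rw [Finset.sum_comm]
    conv_rhs => rw [Finset.sum_comm]
    refine Finset.sum_congr rfl fun j₁ _ => ?_
    rw [Finset.sum_comm]

theorem marginal_of_nash_is_nash_fst {n₁ m₁ n₂ m₂ : ℕ}
    (A1 B1 : Matrix (Fin n₁) (Fin m₁) ℝ) (A2 B2 : Matrix (Fin n₂) (Fin m₂) ℝ)
    (x : Fin n₁ × Fin n₂ → ℝ) (y : Fin m₁ × Fin m₂ → ℝ)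
    (h : IsNash (prodGame A1 A2) (prodGame B1 B2) x y) :
    IsNash A1 B1 (fun i => ∑ l, x (i, l)) (fun j => ∑ l, y (j, l)) := by
  obtain ⟨⟨hxnn, hxs⟩, ⟨hynn, hys⟩, hbx, hby⟩ := h
  have hxs' : ∑ i, ∑ l, x (i, l) = 1 := by rw [← Fintype.sum_prod_type]; exact hxs
  have hys' : ∑ j, ∑ l, y (j, l) = 1 := by rw [← Fintype.sum_prod_type]; exact hys
  have hx2s : ∑ i : Fin n₂, ∑ k, x (k, i) = 1 := by
    rw [Finset.sum_comm]; exact hxs'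
  have hy2s : ∑ j : Fin m₂, ∑ k, y (k, j) = 1 := by
    rw [Finset.sum_comm]; exact hys'
  refine ⟨⟨fun i => Finset.sum_nonneg fun l _ => hxnn _, hxs'⟩,
    ⟨fun j => Finset.sum_nonneg fun l _ => hynn _, hys'⟩, ?_, ?_⟩
  · intro x' hx'
    set x'' : Fin n₁ × Fin n₂ → ℝ := fun p => x' p.1 * ∑ k, x (k, p.2) with hx''def
    have hx''st : IsStochastic x'' := by
      refine ⟨fun p => mul_nonneg (hx'.1 _) (Finset.sum_nonneg fun k _ => hxnn _), ?_⟩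
      rw [Fintype.sum_prod_type]
      simp only [hx''def, ← Finset.mul_sum]
      rw [hx2s]
      simpa using hx'.2
    have key := hbx x'' hx''st
    rw [payoff_prodGame, payoff_prodGame] at key
    have e1 : (fun i => ∑ l, x'' (i, l)) = x' := by
      funext i
      simp only [hx''def, ← Finset.mul_sum, hx2s, mul_one]
    have e2 : (fun i => ∑ k, x'' (k, i)) = (fun i => ∑ k, x (k, i)) := by
      funext i
      simp only [hx''def, ← Finset.sum_mul, hx'.2, one_mul]
    rw [e1, e2] at key
    linarith
  · intro y' hy'
    set y'' : Fin m₁ × Fin m₂ → ℝ := fun q => y' q.1 * ∑ k, y (k, q.2) with hy''def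
    have hy''st : IsStochastic y'' := by
      refine ⟨fun q => mul_nonneg (hy'.1 _) (Finset.sum_nonneg fun k _ => hynn _), ?_⟩
      rw [Fintype.sum_prod_type]
      simp only [hy''def, ← Finset.mul_sum]
      rw [hy2s]
      simpa using hy'.2
    have key := hby y'' hy''st
    rw [payoff_prodGame, payoff_prodGame] at key
    have e1 : (fun j => ∑ l, y'' (j, l)) = y' := by
      funext j
      simp only [hy''def, ← Finset.mul_sum, hy2s, mul_one]
    have e2 : (fun j => ∑ k, y'' (k, j)) = (fun j => ∑ k, y (k, j)) := by
      funext j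
      simp only [hy''def, ← Finset.sum_mul, hy'.2, one_mul]
    rw [e1, e2] at key
    linarith
end

section
/- By symmetry, if (x, y) is a Nash equilibrium of the product game (A¹,B¹)×(A²,B²), then the marginal strategies x²_i = Σ_{l=1}^{n₁} x_{[l,i]} and y²_j = Σ_{l=1}^{m₁} y_{[l,j]} form a Nash equilibrium of the second factor game (A², B²). -/
open Finset

lemma swap4_aux {I₁ I₂ J₁ J₂ : Type*} [Fintype I₁] [Fintype J₁] [Fintype I₂] [Fintype J₂]
    (f : I₁ → I₂ → J₁ → J₂ → ℝ) :
    ∑ i2 : I₂, ∑ j2 : J₂, ∑ j1 : J₁, ∑ i1 : I₁, f i1 i2 j1 j2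
      = ∑ i1, ∑ i2, ∑ j1, ∑ j2, f i1 i2 j1 j2 := by
  calc ∑ i2 : I₂, ∑ j2 : J₂, ∑ j1 : J₁, ∑ i1 : I₁, f i1 i2 j1 j2
      = ∑ i2 : I₂, ∑ j2 : J₂, ∑ i1 : I₁, ∑ j1 : J₁, f i1 i2 j1 j2 :=
        Finset.sum_congr rfl fun _ _ => Finset.sum_congr rfl fun _ _ => Finset.sum_comm
    _ = ∑ i2 : I₂, ∑ i1 : I₁, ∑ j2 : J₂, ∑ j1 : J₁, f i1 i2 j1 j2 :=
        Finset.sum_congr rfl fun _ _ => Finset.sum_comm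
    _ = ∑ i1 : I₁, ∑ i2 : I₂, ∑ j2 : J₂, ∑ j1 : J₁, f i1 i2 j1 j2 := Finset.sum_comm
    _ = ∑ i1, ∑ i2, ∑ j1, ∑ j2, f i1 i2 j1 j2 :=
        Finset.sum_congr rfl fun _ _ => Finset.sum_congr rfl fun _ _ => Finset.sum_comm

lemma pay1_aux {I₁ J₁ I₂ J₂ : Type*} [Fintype I₁] [Fintype J₁] [Fintype I₂] [Fintype J₂]
    (A1 : Matrix I₁ J₁ ℝ) (x : I₁ × I₂ → ℝ) (y : J₁ × J₂ → ℝ) :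
    payoff A1 (fun i => ∑ l, x (i, l)) (fun j => ∑ l, y (j, l)) =
      ∑ i, ∑ j, x i * A1 i.1 j.1 * y j := by
  simp only [payoff, Fintype.sum_prod_type, Finset.sum_mul, Finset.mul_sum]
  refine Finset.sum_congr rfl fun i1 _ => ?_
  rw [show (∑ j1 : J₁, ∑ j2 : J₂, ∑ i2 : I₂, x (i1, i2) * A1 i1 j1 * y (j1, j2))
      = ∑ j1 : J₁, ∑ i2 : I₂, ∑ j2 : J₂, x (i1, i2) * A1 i1 j1 * y (j1, j2) from
    Finset.sum_congr rfl fun j1 _ => Finset.sum_comm, Finset.sum_comm]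

lemma pay2_aux {I₁ J₁ I₂ J₂ : Type*} [Fintype I₁] [Fintype J₁] [Fintype I₂] [Fintype J₂]
    (A2 : Matrix I₂ J₂ ℝ) (x : I₁ × I₂ → ℝ) (y : J₁ × J₂ → ℝ) :
    payoff A2 (fun i => ∑ l, x (l, i)) (fun j => ∑ l, y (l, j)) =
      ∑ i, ∑ j, x i * A2 i.2 j.2 * y j := by
  simp only [payoff, Fintype.sum_prod_type, Finset.sum_mul, Finset.mul_sum]
  exact swap4_aux fun i1 i2 j1 j2 => x (i1, i2) * A2 i2 j2 * y (j1, j2)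

lemma payoff_prod {I₁ J₁ I₂ J₂ : Type*} [Fintype I₁] [Fintype J₁] [Fintype I₂] [Fintype J₂]
    (A1 : Matrix I₁ J₁ ℝ) (A2 : Matrix I₂ J₂ ℝ) (x : I₁ × I₂ → ℝ) (y : J₁ × J₂ → ℝ) :
    payoff (prodGame A1 A2) x y =
      payoff A1 (fun i => ∑ l, x (i, l)) (fun j => ∑ l, y (j, l)) +
      payoff A2 (fun i => ∑ l, x (l, i)) (fun j => ∑ l, y (l, j)) := by
  rw [pay1_aux, pay2_aux]
  simp only [payoff, prodGame]
  rw [← Finset.sum_add_distrib]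
  refine Finset.sum_congr rfl fun i _ => ?_
  rw [← Finset.sum_add_distrib]
  exact Finset.sum_congr rfl fun j _ => by ring

lemma marg_stoch {I₁ I₂ : Type*} [Fintype I₁] [Fintype I₂] (x : I₁ × I₂ → ℝ)
    (hx : IsStochastic x) : IsStochastic (fun i => ∑ l, x (l, i)) := by
  refine ⟨fun i => Finset.sum_nonneg fun l _ => hx.1 _, ?_⟩
  rw [Finset.sum_comm, ← Fintype.sum_prod_type]
  exact hx.2

theorem marginal_of_nash_is_nash_snd {n₁ m₁ n₂ m₂ : ℕ}
    (A1 B1 : Matrix (Fin n₁) (Fin m₁) ℝ) (A2 B2 : Matrix (Fin n₂) (Fin m₂) ℝ)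
    (x : Fin n₁ × Fin n₂ → ℝ) (y : Fin m₁ × Fin m₂ → ℝ)
    (h : IsNash (prodGame A1 A2) (prodGame B1 B2) x y) :
    IsNash A2 B2 (fun i => ∑ l, x (l, i)) (fun j => ∑ l, y (l, j)) := by
  obtain ⟨hx, hy, hA, hB⟩ := h
  have hx1sum : ∑ i1, ∑ l, x (i1, l) = 1 := by
    rw [← Fintype.sum_prod_type]; exact hx.2
  have hy1sum : ∑ j1, ∑ l, y (j1, l) = 1 := by
    rw [← Fintype.sum_prod_type]; exact hy.2
  refine ⟨marg_stoch x hx, marg_stoch y hy, ?_, ?_⟩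
  · intro x' hx'
    set x'' : Fin n₁ × Fin n₂ → ℝ := fun p => (∑ l, x (p.1, l)) * x' p.2 with hx''def
    have hx''s : IsStochastic x'' := by
      refine ⟨fun p => mul_nonneg (Finset.sum_nonneg fun l _ => hx.1 _) (hx'.1 _), ?_⟩
      rw [Fintype.sum_prod_type]
      simp only [hx''def, ← Finset.mul_sum, hx'.2, mul_one]
      exact hx1sum
    have key := hA x'' hx''s
    rw [payoff_prod, payoff_prod] at key
    have hm1 : (fun i => ∑ l, x'' (i, l)) = fun i => ∑ l, x (i, l) := by
      funext i
      simp only [hx''def, ← Finset.mul_sum, hx'.2, mul_one]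
    have hm2 : (fun i => ∑ l, x'' (l, i)) = x' := by
      funext i
      simp only [hx''def, ← Finset.sum_mul, hx1sum, one_mul]
    rw [hm1, hm2] at key
    exact le_of_add_le_add_left key
  · intro y' hy'
    set y'' : Fin m₁ × Fin m₂ → ℝ := fun p => (∑ l, y (p.1, l)) * y' p.2 with hy''def
    have hy''s : IsStochastic y'' := by
      refine ⟨fun p => mul_nonneg (Finset.sum_nonneg fun l _ => hy.1 _) (hy'.1 _), ?_⟩
      rw [Fintype.sum_prod_type]
      simp only [hy''def, ← Finset.mul_sum, hy'.2, mul_one]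
      exact hy1sum
    have key := hB y'' hy''s
    rw [payoff_prod, payoff_prod] at key
    have hm1 : (fun j => ∑ l, y'' (j, l)) = fun j => ∑ l, y (j, l) := by
      funext j
      simp only [hy''def, ← Finset.mul_sum, hy'.2, mul_one]
    have hm2 : (fun j => ∑ l, y'' (l, j)) = y' := by
      funext j
      simp only [hy''def, ← Finset.sum_mul, hy1sum, one_mul]
    rw [hm1, hm2] at key
    exact le_of_add_le_add_left key
end

section
/- A bimatrix game that is a sum game (A¹,B¹) + (A²,B²) with constant K exceeding all absolute payoff values has no strictly dominated pure strategies for either player. -/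
open Finset

theorem sum_game_no_strictly_dominated {n₁ m₁ n₂ m₂ : ℕ}
    (hn₁ : 0 < n₁) (hm₁ : 0 < m₁) (hn₂ : 0 < n₂) (hm₂ : 0 < m₂)
    (A1 B1 : Matrix (Fin n₁) (Fin m₁) ℝ) (A2 B2 : Matrix (Fin n₂) (Fin m₂) ℝ) (K : ℝ)
    (hKA1 : ∀ i j, |A1 i j| < K) (hKB1 : ∀ i j, |B1 i j| < K)
    (hKA2 : ∀ i j, |A2 i j| < K) (hKB2 : ∀ i j, |B2 i j| < K) :
    (¬ ∃ i k, ∀ j, sumGame A1 A2 K i j < sumGame A1 A2 K k j) ∧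
    (¬ ∃ j l, ∀ i, sumGame B1 B2 (-K) i j < sumGame B1 B2 (-K) i l) := by
  constructor
  · rintro ⟨i, k, h⟩
    match i, k with
    | Sum.inl i, Sum.inl k =>
      have := h (Sum.inr ⟨0, hm₂⟩); simp [sumGame] at this
    | Sum.inl i, Sum.inr k =>
      have := h (Sum.inr ⟨0, hm₂⟩); simp only [sumGame] at this
      exact absurd this (not_lt.2 ((abs_lt.1 (hKA2 k ⟨0, hm₂⟩)).2.le))
    | Sum.inr i, Sum.inl k =>
      have := h (Sum.inl ⟨0, hm₁⟩); simp only [sumGame] at this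
      exact absurd this (not_lt.2 ((abs_lt.1 (hKA1 k ⟨0, hm₁⟩)).2.le))
    | Sum.inr i, Sum.inr k =>
      have := h (Sum.inl ⟨0, hm₁⟩); simp [sumGame] at this
  · rintro ⟨j, l, h⟩
    match j, l with
    | Sum.inl j, Sum.inl l =>
      have := h (Sum.inr ⟨0, hn₂⟩); simp [sumGame] at this
    | Sum.inl j, Sum.inr l =>
      have := h (Sum.inl ⟨0, hn₁⟩); simp only [sumGame] at this
      exact absurd this (not_lt.2 ((abs_lt.1 (hKB1 ⟨0, hn₁⟩ j)).1.le))
    | Sum.inr j, Sum.inl l =>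
      have := h (Sum.inr ⟨0, hn₂⟩); simp only [sumGame] at this
      exact absurd this (not_lt.2 ((abs_lt.1 (hKB2 ⟨0, hn₂⟩ j)).1.le))
    | Sum.inr j, Sum.inr l =>
      have := h (Sum.inl ⟨0, hn₁⟩); simp [sumGame] at this
end

section
/- If in the product game (A,B) = (A¹,B¹)×(A²,B²) the strategy x is a best response to y, then the marginal x¹ (defined by x¹_i = Σ_l x_{[i,l]}) is a best response to the marginal y¹ in the game (A¹,B¹). -/
open Finset

lemma payoff_prod_s14 {n₁ m₁ n₂ m₂ : ℕ}
    (A1 : Matrix (Fin n₁) (Fin m₁) ℝ) (A2 : Matrix (Fin n₂) (Fin m₂) ℝ)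
    (z : Fin n₁ × Fin n₂ → ℝ) (w : Fin m₁ × Fin m₂ → ℝ) :
    payoff (prodGame A1 A2) z w =
      payoff A1 (fun i => ∑ l, z (i, l)) (fun j => ∑ k, w (j, k)) +
      payoff A2 (fun l => ∑ i, z (i, l)) (fun k => ∑ j, w (j, k)) := by
  simp only [payoff, prodGame, Fintype.sum_prod_type, Finset.sum_mul, Finset.mul_sum,
    mul_add, add_mul, Finset.sum_add_distrib]
  congr 1
  · refine Finset.sum_congr rfl fun i _ => ?_
    rw [Finset.sum_comm]
    refine Finset.sum_congr rfl fun j _ => ?_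
    rw [Finset.sum_comm]
  · rw [Finset.sum_comm]
    refine Finset.sum_congr rfl fun l _ => ?_
    rw [Finset.sum_comm]
    refine Eq.trans (Finset.sum_congr rfl fun j _ => Finset.sum_comm) ?_
    rw [Finset.sum_comm]

theorem marginal_of_best_response_is_best_response {n₁ m₁ n₂ m₂ : ℕ}
    (A1 : Matrix (Fin n₁) (Fin m₁) ℝ) (A2 : Matrix (Fin n₂) (Fin m₂) ℝ)
    (x : Fin n₁ × Fin n₂ → ℝ) (y : Fin m₁ × Fin m₂ → ℝ)
    (hx : IsStochastic x) (hy : IsStochastic y)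
    (h : IsBestResponse (prodGame A1 A2) x y) :
    IsBestResponse A1 (fun i => ∑ l, x (i, l)) (fun j => ∑ l, y (j, l)) := by
  intro x' hx'
  set x2 : Fin n₂ → ℝ := fun l => ∑ i, x (i, l) with hx2def
  have hx2sum : ∑ l, x2 l = 1 := by
    rw [hx2def, Finset.sum_comm, ← Fintype.sum_prod_type]
    exact hx.2
  set z : Fin n₁ × Fin n₂ → ℝ := fun p => x' p.1 * x2 p.2 with hzdef
  have hz : IsStochastic z := by
    constructor
    · intro p
      exact mul_nonneg (hx'.1 p.1) (Finset.sum_nonneg fun i _ => hx.1 (i, p.2))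
    · rw [hzdef, Fintype.sum_prod_type]
      simp only [← Finset.mul_sum]
      rw [hx2sum]
      simpa using hx'.2
  have key := h z hz
  rw [payoff_prod_s14, payoff_prod_s14] at key
  have e1 : (fun i => ∑ l, z (i, l)) = x' := by
    funext i
    simp only [hzdef, ← Finset.mul_sum, hx2sum, mul_one]
  have e2 : (fun l => ∑ i, z (i, l)) = x2 := by
    funext l
    simp only [hzdef, ← Finset.sum_mul, hx'.2, one_mul]
  rw [e1, e2] at key
  linarith
end

section
/- The sum game (A¹,B¹) + (A²,B²) with constant K has no pure Nash equilibrium at all: every Nash equilibrium mixes strictly between the two blocks for both players. -/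
open Finset

theorem sum_game_no_pure_nash {n₁ m₁ n₂ m₂ : ℕ}
    (hn₁ : 0 < n₁) (hm₁ : 0 < m₁) (hn₂ : 0 < n₂) (hm₂ : 0 < m₂)
    (A1 B1 : Matrix (Fin n₁) (Fin m₁) ℝ) (A2 B2 : Matrix (Fin n₂) (Fin m₂) ℝ) (K : ℝ)
    (hKA1 : ∀ i j, |A1 i j| < K) (hKB1 : ∀ i j, |B1 i j| < K)
    (hKA2 : ∀ i j, |A2 i j| < K) (hKB2 : ∀ i j, |B2 i j| < K) :
    ¬ ∃ i j, IsPureNash (sumGame A1 A2 K) (sumGame B1 B2 (-K)) i j := by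
  rintro ⟨i, j, h1, h2⟩
  obtain ⟨i₁⟩ := Fin.pos_iff_nonempty.mp hn₁
  obtain ⟨j₁⟩ := Fin.pos_iff_nonempty.mp hm₁
  obtain ⟨i₂⟩ := Fin.pos_iff_nonempty.mp hn₂
  obtain ⟨j₂⟩ := Fin.pos_iff_nonempty.mp hm₂
  match i, j with
  | Sum.inl a, Sum.inl b =>
    have := h1 (Sum.inr i₂)
    simp only [sumGame] at this
    exact absurd this (not_le.mpr ((abs_lt.mp (hKA1 a b)).2))
  | Sum.inl a, Sum.inr b =>
    have := h2 (Sum.inl j₁)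
    simp only [sumGame] at this
    exact absurd this (not_le.mpr ((abs_lt.mp (hKB1 a j₁)).1))
  | Sum.inr a, Sum.inl b =>
    have := h2 (Sum.inr j₂)
    simp only [sumGame] at this
    exact absurd this (not_le.mpr ((abs_lt.mp (hKB2 a j₂)).1))
  | Sum.inr a, Sum.inr b =>
    have := h1 (Sum.inl i₁)
    simp only [sumGame] at this
    exact absurd this (not_le.mpr ((abs_lt.mp (hKA2 a b)).2))
end
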